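/- arXiv:2509.05229 — 2 statements merged into one kernel-verified Lean document; each statement's English description precedes it below -/
import Mathlib

section
/- Let 0 < θ < π, 1 ≤ α < 2, and θ_0 ∈ (π/2, (π-θ)/α). For λ = r e^{-iθ_0} with r ≥ ρ > 0 and z with arg z = θ, one has |λ^α + z| ≥ cos((θ + αθ_0)/2)·(ρ^α + |z|), provided (θ + αθ_0)/2 < π/2. -/
/-!
In polar form `λ ^ α = r ^ α e^{-iαθ₀}` (the principal branch applies since `0 < θ₀ < π`) and
`z = ‖z‖ e^{iθ}`. Rotating the sum so that the bisector of the two directions becomes the real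
axis, its real part is `cos ((θ + αθ₀) / 2) (r ^ α + ‖z‖)`, and a real part is at most the norm.
-/

open Real

namespace Complex

theorem ofReal_mul_exp_mul_I_cpow_ofReal {r φ : ℝ} (hr : 0 < r) (hφ : φ ∈ Set.Ioc (-π) π)
    (a : ℝ) : ((r : ℂ) * exp (φ * I)) ^ (a : ℂ) = ((r ^ a : ℝ) : ℂ) * exp ((a * φ : ℝ) * I) := by
  have hlog : log (exp (φ * I)) = φ * I := log_exp (by simpa using hφ.1) (by simpa using hφ.2)
  rw [cpow_def_of_ne_zero (mul_ne_zero (ofReal_ne_zero.2 hr.ne') (exp_ne_zero _)),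
    log_ofReal_mul hr (exp_ne_zero _), hlog, rpow_def_of_pos hr, add_mul, exp_add]
  push_cast
  ring_nf

theorem cos_half_sub_mul_add_le_norm (a b φ₁ φ₂ : ℝ) :
    Real.cos ((φ₂ - φ₁) / 2) * (a + b) ≤ ‖(a : ℂ) * exp (φ₁ * I) + b * exp (φ₂ * I)‖ := by
  set m := (φ₁ + φ₂) / 2
  have hrot : exp ((-m : ℝ) * I) * (a * exp (φ₁ * I) + b * exp (φ₂ * I))
      = a * exp ((-((φ₂ - φ₁) / 2) : ℝ) * I) + b * exp (((φ₂ - φ₁) / 2 : ℝ) * I) := by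
    simp only [mul_add, ← mul_assoc, mul_comm _ (a : ℂ), mul_comm _ (b : ℂ)]
    simp only [mul_assoc, ← exp_add]
    congr 3 <;> simp only [m] <;> push_cast <;> ring
  calc Real.cos ((φ₂ - φ₁) / 2) * (a + b)
      = (exp ((-m : ℝ) * I) * (a * exp (φ₁ * I) + b * exp (φ₂ * I))).re := by
        rw [hrot]
        simp only [add_re, re_ofReal_mul, exp_ofReal_mul_I_re, Real.cos_neg]
        ring
    _ ≤ ‖exp ((-m : ℝ) * I) * (a * exp (φ₁ * I) + b * exp (φ₂ * I))‖ := re_le_norm _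
    _ = ‖(a : ℂ) * exp (φ₁ * I) + b * exp (φ₂ * I)‖ := by
        rw [norm_mul, norm_exp_ofReal_mul_I, one_mul]

end Complex

theorem sector_lower_bound_general (θ α θ₀ ρ r : ℝ) (z lam : ℂ)
    (hθ : 0 < θ) (hα1 : 1 ≤ α)
    (hθ₀ : θ₀ ∈ Set.Ioo (π / 2) ((π - θ) / α))
    (hρ : 0 < ρ) (hr : ρ ≤ r)
    (hlam : lam = (r : ℂ) * Complex.exp (-(θ₀ : ℂ) * Complex.I))
    (hz : z.arg = θ) :
    Real.cos ((θ + α * θ₀) / 2) * (ρ ^ α + ‖z‖)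
      ≤ ‖lam ^ (α : ℂ) + z‖ := by
  obtain ⟨hθ₀_gt, hθ₀_lt⟩ := hθ₀
  have hα : 0 < α := by linarith
  have hθ₀_pos : 0 < θ₀ := by linarith [pi_pos]
  have hαθ₀_pos : 0 < α * θ₀ := mul_pos hα hθ₀_pos
  have hsum : θ + α * θ₀ < π := by linarith [(lt_div_iff₀ hα).1 hθ₀_lt]
  have hθ₀_lt_pi : θ₀ < π := by linarith [le_mul_of_one_le_left hθ₀_pos.le hα1]
  have hcos : 0 ≤ Real.cos ((θ + α * θ₀) / 2) :=
    Real.cos_nonneg_of_mem_Icc ⟨by linarith [pi_pos], by linarith⟩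
  have hpow : lam ^ (α : ℂ)
      = ((r ^ α : ℝ) : ℂ) * Complex.exp ((α * -θ₀ : ℝ) * Complex.I) := by
    rw [hlam, show -(θ₀ : ℂ) * Complex.I = ((-θ₀ : ℝ) : ℂ) * Complex.I by push_cast; ring]
    exact Complex.ofReal_mul_exp_mul_I_cpow_ofReal (hρ.trans_le hr)
      ⟨by linarith, by linarith [pi_pos]⟩ α
  calc Real.cos ((θ + α * θ₀) / 2) * (ρ ^ α + ‖z‖)
      ≤ Real.cos ((θ + α * θ₀) / 2) * (r ^ α + ‖z‖) := by gcongr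
    _ ≤ ‖((r ^ α : ℝ) : ℂ) * Complex.exp ((α * -θ₀ : ℝ) * Complex.I)
          + ‖z‖ * Complex.exp (θ * Complex.I)‖ := by
        convert Complex.cos_half_sub_mul_add_le_norm _ _ _ _ using 3
        ring
    _ = ‖lam ^ (α : ℂ) + z‖ := by rw [hpow, ← hz, Complex.norm_mul_exp_arg_mul_I]

theorem sector_lower_bound (θ α θ₀ ρ r : ℝ) (z lam : ℂ)
    (hθ : 0 < θ) (hθπ : θ < π) (hα1 : 1 ≤ α) (hα2 : α < 2)
    (hθ₀ : θ₀ ∈ Set.Ioo (π / 2) ((π - θ) / α))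
    (hρ : 0 < ρ) (hr : ρ ≤ r)
    (hlam : lam = (r : ℂ) * Complex.exp (-(θ₀ : ℂ) * Complex.I))
    (hz : z.arg = θ)
    (hhalf : (θ + α * θ₀) / 2 < π / 2) :
    Real.cos ((θ + α * θ₀) / 2) * (ρ ^ α + ‖z‖)
      ≤ ‖lam ^ (α : ℂ) + z‖ :=
  sector_lower_bound_general θ α θ₀ ρ r z lam hθ hα1 hθ₀ hρ hr hlam hz
end

section
/- Let -1 < γ < 0, α ∈ (0,2), and t > 0. Then for N_0 = t^{-α}, the quantity ∫_0^{N_0} r^{1+γ}/(1 + t^α r) dr + ∫_{N_0}^∞ r^{1+γ}/(1 + t^{2α} r²) dr is finite and bounded by C · t^{-2α - αγ} for a constant C depending only on γ and α. -/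
/-! Near the origin the denominator is at least `1`, so the first integral is at most
`∫₀^N r^(1+γ) dr = N^(2+γ)/(2+γ)`; beyond `N` it is at least `t^(2α) r²`, so the second integral is
at most `t^(-2α) ∫_N^∞ r^(γ-1) dr = t^(-2α) N^γ/(-γ)`. For `N = t^(-α)` both bounds equal a constant
times `t^(-2α-αγ)`. -/

open Real MeasureTheory Set

section
variable {a c : ℝ}

lemma rpow_div_one_add_mul_le_rpow (hc : 0 ≤ c) {r : ℝ} (hr : 0 ≤ r) :
    r ^ a / (1 + c * r) ≤ r ^ a :=
  div_le_self (rpow_nonneg hr _) (le_add_of_nonneg_right (mul_nonneg hc hr))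

lemma intervalIntegrable_rpow_div_one_add_mul (ha : -1 < a) (hc : 0 ≤ c) {N : ℝ} (hN : 0 ≤ N) :
    IntervalIntegrable (fun r : ℝ => r ^ a / (1 + c * r)) volume 0 N := by
  refine (intervalIntegral.intervalIntegrable_rpow' ha).mono_fun
    (by fun_prop : Measurable _).aestronglyMeasurable ?_
  rw [uIoc_of_le hN]
  filter_upwards [ae_restrict_mem measurableSet_Ioc] with r hr
  have hr0 : 0 ≤ r := hr.1.le
  rw [norm_of_nonneg (div_nonneg (rpow_nonneg hr0 _) (by positivity)),
    norm_of_nonneg (rpow_nonneg hr0 _)]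
  exact rpow_div_one_add_mul_le_rpow hc hr0

lemma integral_rpow_div_one_add_mul_le (ha : -1 < a) (hc : 0 ≤ c) {N : ℝ} (hN : 0 ≤ N) :
    ∫ r in (0:ℝ)..N, r ^ a / (1 + c * r) ≤ N ^ (a + 1) / (a + 1) :=
  calc ∫ r in (0:ℝ)..N, r ^ a / (1 + c * r)
      ≤ ∫ r in (0:ℝ)..N, r ^ a :=
        intervalIntegral.integral_mono_on hN (intervalIntegrable_rpow_div_one_add_mul ha hc hN)
          (intervalIntegral.intervalIntegrable_rpow' ha)
          fun _ hr => rpow_div_one_add_mul_le_rpow hc hr.1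
    _ = N ^ (a + 1) / (a + 1) := by
        rw [integral_rpow (Or.inl ha), zero_rpow (by linarith : 0 < a + 1).ne', sub_zero]

lemma rpow_div_one_add_mul_sq_le (hc : 0 < c) {r : ℝ} (hr : 0 < r) :
    r ^ a / (1 + c * r ^ 2) ≤ c⁻¹ * r ^ (a - 2) :=
  calc r ^ a / (1 + c * r ^ 2)
      ≤ r ^ a / (c * r ^ 2) :=
        div_le_div_of_nonneg_left (rpow_nonneg hr.le _) (by positivity)
          (le_add_of_nonneg_left zero_le_one)
    _ = c⁻¹ * r ^ (a - 2) := by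
        rw [rpow_sub hr, rpow_two]
        ring

lemma integrableOn_Ioi_rpow_div_one_add_mul_sq (ha : a < 1) (hc : 0 < c) {N : ℝ} (hN : 0 < N) :
    IntegrableOn (fun r : ℝ => r ^ a / (1 + c * r ^ 2)) (Ioi N) := by
  refine ((integrableOn_Ioi_rpow_of_lt (a := a - 2) (by linarith) hN).const_mul c⁻¹).mono'
    (by fun_prop : Measurable _).aestronglyMeasurable ?_
  filter_upwards [ae_restrict_mem measurableSet_Ioi] with r hr
  have hr0 : 0 < r := hN.trans hr
  rw [norm_of_nonneg (by positivity)]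
  exact rpow_div_one_add_mul_sq_le hc hr0

lemma setIntegral_Ioi_rpow_div_one_add_mul_sq_le (ha : a < 1) (hc : 0 < c) {N : ℝ}
    (hN : 0 < N) :
    ∫ r in Ioi N, r ^ a / (1 + c * r ^ 2) ≤ c⁻¹ * (N ^ (a - 1) / (1 - a)) :=
  calc ∫ r in Ioi N, r ^ a / (1 + c * r ^ 2)
      ≤ ∫ r in Ioi N, c⁻¹ * r ^ (a - 2) :=
        setIntegral_mono_on (integrableOn_Ioi_rpow_div_one_add_mul_sq ha hc hN)
          ((integrableOn_Ioi_rpow_of_lt (by linarith) hN).const_mul c⁻¹) measurableSet_Ioi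
          fun _ hr => rpow_div_one_add_mul_sq_le hc (hN.trans hr)
    _ = c⁻¹ * (N ^ (a - 1) / (1 - a)) := by
        rw [integral_const_mul, integral_Ioi_rpow_of_lt (by linarith) hN,
          show a - 2 + 1 = a - 1 by ring, neg_div, ← div_neg, neg_sub]

end

theorem split_integral_bound_general (γ α : ℝ) (hγ₁ : -1 < γ) (hγ₂ : γ < 0) :
    ∃ C > 0, ∀ t : ℝ, 0 < t →
      IntervalIntegrable (fun r : ℝ => r ^ (1 + γ) / (1 + t ^ α * r)) volume 0 (t ^ (-α)) ∧
      IntegrableOn (fun r : ℝ => r ^ (1 + γ) / (1 + t ^ (2 * α) * r ^ 2))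
        (Set.Ioi (t ^ (-α))) ∧
      (∫ r in (0:ℝ)..(t ^ (-α)), r ^ (1 + γ) / (1 + t ^ α * r))
        + (∫ r in Set.Ioi (t ^ (-α)), r ^ (1 + γ) / (1 + t ^ (2 * α) * r ^ 2))
        ≤ C * t ^ (-(2 * α) - α * γ) := by
  have h2γ : 0 < 2 + γ := by linarith
  have hnγ : 0 < -γ := by linarith
  refine ⟨1 / (2 + γ) + 1 / (-γ), by positivity, fun t ht => ?_⟩
  set N := t ^ (-α)
  have hN : 0 < N := rpow_pos_of_pos ht _
  have hN_near : N ^ (1 + γ + 1) = t ^ (-(2 * α) - α * γ) := by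
    rw [← rpow_mul ht.le]
    ring_nf
  have hN_far : (t ^ (2 * α))⁻¹ * N ^ (1 + γ - 1) = t ^ (-(2 * α) - α * γ) := by
    rw [← rpow_neg ht.le, ← rpow_mul ht.le, ← rpow_add ht]
    ring_nf
  refine ⟨intervalIntegrable_rpow_div_one_add_mul (by linarith) (rpow_nonneg ht.le _) hN.le,
    integrableOn_Ioi_rpow_div_one_add_mul_sq (by linarith) (rpow_pos_of_pos ht _) hN, ?_⟩
  calc _ ≤ N ^ (1 + γ + 1) / (1 + γ + 1)
        + (t ^ (2 * α))⁻¹ * (N ^ (1 + γ - 1) / (1 - (1 + γ))) :=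
        add_le_add (integral_rpow_div_one_add_mul_le (by linarith) (rpow_nonneg ht.le _) hN.le)
          (setIntegral_Ioi_rpow_div_one_add_mul_sq_le (by linarith) (rpow_pos_of_pos ht _) hN)
    _ = _ := by
        rw [mul_div_assoc', hN_far, hN_near]
        ring

theorem split_integral_bound (γ α : ℝ) (hγ₁ : -1 < γ) (hγ₂ : γ < 0)
    (hα : α ∈ Set.Ioo (0:ℝ) 2) :
    ∃ C > 0, ∀ t : ℝ, 0 < t →
      IntervalIntegrable (fun r : ℝ => r ^ (1 + γ) / (1 + t ^ α * r)) volume 0 (t ^ (-α)) ∧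
      IntegrableOn (fun r : ℝ => r ^ (1 + γ) / (1 + t ^ (2 * α) * r ^ 2))
        (Set.Ioi (t ^ (-α))) ∧
      (∫ r in (0:ℝ)..(t ^ (-α)), r ^ (1 + γ) / (1 + t ^ α * r))
        + (∫ r in Set.Ioi (t ^ (-α)), r ^ (1 + γ) / (1 + t ^ (2 * α) * r ^ 2))
        ≤ C * t ^ (-(2 * α) - α * γ) :=
  split_integral_bound_general γ α hγ₁ hγ₂
end
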